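/- arXiv:2404.10648 — 6 statements merged into one kernel-verified Lean document; each statement's English description precedes it below -/
import Mathlib

section
/- Let q ∈ (3/4, 1), W = I_q × [0,∞) where I_q = ((1-√(4q-3))/2, (1+√(4q-3))/2), and define τ(v) = ((q-1+v₁)/v₁, v₂/v₁). Then for every v ∈ W, τ(v)₁ ∈ I_q, i.e., (1-√(4q-3))/2 < (q-1+v₁)/v₁ < (1+√(4q-3))/2. -/
open Set

-- `x ↦ a + b - a * b / x` is the increasing Möbius map fixing `a` and `b`.
theorem add_sub_mul_div_mem_Ioo {a b x : ℝ} (ha : 0 < a) (hx : x ∈ Ioo a b) :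
    a + b - a * b / x ∈ Ioo a b := by
  obtain ⟨hax, hxb⟩ := hx
  have hx0 : 0 < x := ha.trans hax
  have hb : 0 < b := hx0.trans hxb
  constructor
  · have : a * b / x < b := by
      rw [div_lt_iff₀ hx0, mul_comm a]
      exact mul_lt_mul_of_pos_left hax hb
    linarith
  · have : a < a * b / x := by
      rw [lt_div_iff₀ hx0]
      exact mul_lt_mul_of_pos_left hxb ha
    linarith

-- The endpoints of `I_q` are the roots of `t ^ 2 - t + (1 - q)`, so `τ₁` is the map above.
theorem tau_fst_mem_Iq_general (q : ℝ) (hq1 : 3/4 < q) (hq2 : q < 1)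
    (v : ℝ × ℝ)
    (hv1 : v.1 ∈ Set.Ioo ((1 - Real.sqrt (4*q - 3))/2) ((1 + Real.sqrt (4*q - 3))/2)) :
    (1 - Real.sqrt (4*q - 3))/2 < (q - 1 + v.1)/v.1 ∧
    (q - 1 + v.1)/v.1 < (1 + Real.sqrt (4*q - 3))/2 := by
  set s := Real.sqrt (4*q - 3)
  have hs_sq : s ^ 2 = 4*q - 3 := Real.sq_sqrt (by linarith)
  have hs_lt : s < 1 := (Real.sqrt_lt' one_pos).2 (by linarith)
  have hmul : (1 - s)/2 * ((1 + s)/2) = 1 - q := by linear_combination (-1/4 : ℝ) * hs_sq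
  have hpos : 0 < (1 - s)/2 := by linarith
  have hx0 : v.1 ≠ 0 := (hpos.trans hv1.1).ne'
  have htau : (q - 1 + v.1)/v.1 = (1 - s)/2 + (1 + s)/2 - (1 - s)/2 * ((1 + s)/2) / v.1 := by
    rw [hmul]
    field_simp
    ring
  rw [htau]
  exact add_sub_mul_div_mem_Ioo hpos hv1

theorem tau_fst_mem_Iq (q : ℝ) (hq1 : 3/4 < q) (hq2 : q < 1)
    (v : ℝ × ℝ)
    (hv1 : v.1 ∈ Set.Ioo ((1 - Real.sqrt (4*q - 3))/2) ((1 + Real.sqrt (4*q - 3))/2))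
    (hv2 : 0 ≤ v.2) :
    (1 - Real.sqrt (4*q - 3))/2 < (q - 1 + v.1)/v.1 ∧
    (q - 1 + v.1)/v.1 < (1 + Real.sqrt (4*q - 3))/2 :=
  tau_fst_mem_Iq_general q hq1 hq2 v hv1
end

section
/- Let q ∈ (3/4, 1), W = I_q × [0,∞) with I_q = ((1-√(4q-3))/2, (1+√(4q-3))/2), and τ(v) = ((q-1+v₁)/v₁, v₂/v₁). For every v ∈ W: τ(v)₁ > v₁, τ(v)₂ ≥ v₂, and if v₂ > 0 then τ(v)₂ > v₂. -/
/-!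
Writing `d = 4q - 3`, the interval `I_q` is exactly where `(2x - 1)² < d`, i.e. where
`x² < q - 1 + x`; dividing by `x > 0` gives `τ(v)₁ > v₁`. Since `d < 1`, also `0 < x < 1`,
so dividing `v₂ ≥ 0` by `v₁` can only increase it, strictly when `v₂ > 0`.
-/

open Set

lemma sq_two_mul_sub_one_lt_of_mem_Ioo {d x : ℝ}
    (hx : x ∈ Ioo ((1 - √d) / 2) ((1 + √d) / 2)) : (2 * x - 1) ^ 2 < d := by
  obtain ⟨hlo, hhi⟩ := hx
  have hd : 0 < d := Real.sqrt_pos.1 (by linarith)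
  calc (2 * x - 1) ^ 2 < √d ^ 2 := sq_lt_sq' (by linarith) (by linarith)
    _ = d := Real.sq_sqrt hd.le

lemma mem_Ioo_zero_one_of_sq_two_mul_sub_one_lt_one {x : ℝ} (hx : (2 * x - 1) ^ 2 < 1) :
    x ∈ Ioo 0 1 := by
  obtain ⟨hlo, hhi⟩ := abs_lt.1 ((sq_lt_one_iff_abs_lt_one _).1 hx)
  constructor <;> linarith

theorem tau_increasing_general (q : ℝ) (hq2 : q < 1)
    (v : ℝ × ℝ)
    (hv1 : v.1 ∈ Set.Ioo ((1 - Real.sqrt (4*q - 3))/2) ((1 + Real.sqrt (4*q - 3))/2))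
    (hv2 : 0 ≤ v.2) :
    (q - 1 + v.1)/v.1 > v.1 ∧ v.2/v.1 ≥ v.2 ∧ (0 < v.2 → v.2/v.1 > v.2) := by
  have hsq := sq_two_mul_sub_one_lt_of_mem_Ioo hv1
  obtain ⟨hx0, hx1⟩ := mem_Ioo_zero_one_of_sq_two_mul_sub_one_lt_one (x := v.1) (by linarith)
  refine ⟨(lt_div_iff₀ hx0).2 (by nlinarith), le_div_self hv2 hx0 hx1.le, fun hpos => ?_⟩
  exact (lt_div_iff₀ hx0).2 (mul_lt_of_lt_one_right hpos hx1)

theorem tau_increasing (q : ℝ) (hq1 : 3/4 < q) (hq2 : q < 1)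
    (v : ℝ × ℝ)
    (hv1 : v.1 ∈ Set.Ioo ((1 - Real.sqrt (4*q - 3))/2) ((1 + Real.sqrt (4*q - 3))/2))
    (hv2 : 0 ≤ v.2) :
    (q - 1 + v.1)/v.1 > v.1 ∧ v.2/v.1 ≥ v.2 ∧ (0 < v.2 → v.2/v.1 > v.2) :=
  tau_increasing_general q hq2 v hv1 hv2
end

section
/- Let q ∈ (3/4, 1), W = I_q × [0,∞), τ(v) = ((q-1+v₁)/v₁, v₂/v₁), and for w ∈ W let L(w) = {λw + (1-λ)τ(w) : λ ∈ (0,1]}. Then for every w ∈ W and u ∈ L(w), we have τ(u) ∈ L(τ(w)). -/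
noncomputable def tau (q : ℝ) (v : ℝ × ℝ) : ℝ × ℝ := ((q - 1 + v.1)/v.1, v.2/v.1)

noncomputable def L (q : ℝ) (w : ℝ × ℝ) : Set (ℝ × ℝ) :=
  {p | ∃ l ∈ Set.Ioc (0:ℝ) 1, p = l • w + (1 - l) • tau q w}

/-!
In homogeneous coordinates `τ` is the linear map `(v₁, v₂, 1) ↦ (q - 1 + v₁, v₂, v₁)`, so it maps
segments on which the first coordinate stays positive to segments: the point `u` with weight `l` on
`[w, τ w]` goes to the point with weight `l w₁ / u₁` on `[τ w, τ (τ w)]`. The first coordinate of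
`w` and of `τ w` is positive because the left end of `I_q` exceeds `1 - q`.
-/

theorem sqrt_four_mul_sub_three_lt {q : ℝ} (hq : 1 / 2 < q) (hq' : q ≠ 1) :
    Real.sqrt (4 * q - 3) < 2 * q - 1 := by
  have hsq : 0 < (q - 1) ^ 2 := by positivity [sub_ne_zero.mpr hq']
  rw [Real.sqrt_lt' (by linarith)]
  nlinarith

theorem tau_smul_add_smul_tau {q l : ℝ} {w : ℝ × ℝ} (hw : w.1 ≠ 0) (hτw : q - 1 + w.1 ≠ 0)
    (hu : (l • w + (1 - l) • tau q w).1 ≠ 0) :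
    tau q (l • w + (1 - l) • tau q w) =
      (l * w.1 / (l • w + (1 - l) • tau q w).1) • tau q w +
        (1 - l * w.1 / (l • w + (1 - l) • tau q w).1) • tau q (tau q w) := by
  obtain ⟨x, y⟩ := w
  simp only [tau, Prod.fst_add, Prod.smul_fst, smul_eq_mul] at hw hτw hu ⊢
  have hu₁ : l * x + (1 - l) * ((q - 1 + x) / x) = (l * x * x + (1 - l) * (q - 1 + x)) / x := by
    field_simp
  rw [hu₁] at hu ⊢
  generalize hD : l * x * x + (1 - l) * (q - 1 + x) = D at hu ⊢
  have hD0 : D ≠ 0 := by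
    contrapose! hu
    rw [hu, zero_div]
  ext <;> simp only [Prod.fst_add, Prod.snd_add, Prod.smul_fst, Prod.smul_snd, smul_eq_mul] <;>
    field_simp <;> rw [← hD] <;> ring

theorem tau_mem_L_tau {q : ℝ} {w u : ℝ × ℝ} (hw : 0 < w.1) (hτw : 0 < q - 1 + w.1)
    (hu : u ∈ L q w) : tau q u ∈ L q (tau q w) := by
  obtain ⟨l, ⟨hl0, hl1⟩, rfl⟩ := hu
  have hτw₁ : 0 < (tau q w).1 := div_pos hτw hw
  have hu₁ : (l • w + (1 - l) • tau q w).1 = l * w.1 + (1 - l) * (tau q w).1 := rfl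
  have hlw : 0 < l * w.1 := mul_pos hl0 hw
  have hrest : 0 ≤ (1 - l) * (tau q w).1 := mul_nonneg (by linarith) hτw₁.le
  have hu₁pos : 0 < (l • w + (1 - l) • tau q w).1 := by rw [hu₁]; linarith
  refine ⟨l * w.1 / (l • w + (1 - l) • tau q w).1, ⟨div_pos hlw hu₁pos, ?_⟩,
    tau_smul_add_smul_tau hw.ne' hτw.ne' hu₁pos.ne'⟩
  rw [div_le_one hu₁pos, hu₁]
  linarith

theorem tau_maps_segment_general (q : ℝ) (hq1 : 3/4 < q) (hq2 : q < 1)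
    (w : ℝ × ℝ)
    (hw1 : w.1 ∈ Set.Ioo ((1 - Real.sqrt (4*q - 3))/2) ((1 + Real.sqrt (4*q - 3))/2))
    (u : ℝ × ℝ) (hu : u ∈ L q w) :
    tau q u ∈ L q (tau q w) := by
  have hs := sqrt_four_mul_sub_three_lt (q := q) (by linarith) hq2.ne
  have hτw : 0 < q - 1 + w.1 := by linarith [hw1.1]
  exact tau_mem_L_tau (by linarith) hτw hu

theorem tau_maps_segment (q : ℝ) (hq1 : 3/4 < q) (hq2 : q < 1)
    (w : ℝ × ℝ)
    (hw1 : w.1 ∈ Set.Ioo ((1 - Real.sqrt (4*q - 3))/2) ((1 + Real.sqrt (4*q - 3))/2))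
    (hw2 : 0 ≤ w.2)
    (u : ℝ × ℝ) (hu : u ∈ L q w) :
    tau q u ∈ L q (tau q w) :=
  tau_maps_segment_general q hq1 hq2 w hw1 u hu
end

section
/- Let q ∈ (3/4, 1), κ ∈ (0,1)² with κ₁ ∈ I_q and κ₂ > 0, and σ(v) = ((1-q)/(1-v₁), v₂(1-q)/(1-v₁)). Then the sequence (σᵏ(κ)₁)ₖ is strictly decreasing and converges to (1-√(4q-3))/2. -/
/-!
The first coordinate of `sig q` evolves on its own, by `x ↦ (1 - q) / (1 - x)`. Writing
`1 - q = L (1 - L)` with `L = (1 - √(4q - 3)) / 2`, this map has the fixed points `L` and `1 - L`,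
maps `(L, 1 - L)` into itself and lies strictly below the diagonal there. So its orbits in that
interval decrease, and their limit is a fixed point in `[L, 1 - L)`, which can only be `L`.
-/

noncomputable def sig (q : ℝ) (v : ℝ × ℝ) : ℝ × ℝ :=
  ((1 - q)/(1 - v.1), v.2 * (1 - q)/(1 - v.1))

open Set Filter Function Topology

section IterateBelowDiagonal

variable {α : Type*} {f : α → α} {x : α}

theorem strictAnti_iterate_of_lt_self [Preorder α] {s : Set α} (hmaps : MapsTo f s s)
    (hlt : ∀ y ∈ s, f y < y) (hx : x ∈ s) : StrictAnti fun n => f^[n] x :=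
  strictAnti_nat_of_succ_lt fun n => by
    rw [iterate_succ_apply']
    exact hlt _ (hmaps.iterate n hx)

theorem tendsto_iterate_of_lt_self [ConditionallyCompleteLinearOrder α] [TopologicalSpace α]
    [OrderTopology α] {a b : α} (hmaps : MapsTo f (Ioo a b) (Ioo a b))
    (hlt : ∀ y ∈ Ioo a b, f y < y) (hcont : ∀ y ∈ Ico a b, ContinuousAt f y)
    (hx : x ∈ Ioo a b) : Tendsto (fun n => f^[n] x) atTop (𝓝 a) := by
  have hmem : ∀ n, f^[n] x ∈ Ioo a b := fun n => hmaps.iterate n hx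
  have hbdd : BddBelow (range fun n => f^[n] x) :=
    ⟨a, forall_mem_range.2 fun n => (hmem n).1.le⟩
  have htend := tendsto_atTop_ciInf (strictAnti_iterate_of_lt_self hmaps hlt hx).antitone hbdd
  set c := ⨅ n, f^[n] x
  have hac : a ≤ c := le_ciInf fun n => (hmem n).1.le
  have hcb : c < b := (ciInf_le hbdd 0).trans_lt hx.2
  have hfix : IsFixedPt f c := isFixedPt_of_tendsto_iterate htend (hcont c ⟨hac, hcb⟩)
  obtain rfl | hac := hac.eq_or_lt
  · exact htend
  · exact absurd hfix (hlt c ⟨hac, hcb⟩).ne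

end IterateBelowDiagonal

section MobiusMap

variable {L : ℝ}

theorem mapsTo_div_one_sub (hL : 0 < L) :
    MapsTo (fun x => L * (1 - L) / (1 - x)) (Ioo L (1 - L)) (Ioo L (1 - L)) := by
  rintro x ⟨hLx, hxL⟩
  have hx : 0 < 1 - x := by linarith
  constructor
  · rw [lt_div_iff₀ hx]
    nlinarith
  · rw [div_lt_iff₀ hx]
    nlinarith

theorem div_one_sub_lt_self (hL : 0 < L) {x : ℝ} (hx : x ∈ Ioo L (1 - L)) :
    L * (1 - L) / (1 - x) < x := by
  obtain ⟨hLx, hxL⟩ := hx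
  rw [div_lt_iff₀ (by linarith)]
  nlinarith [mul_pos (sub_pos.2 hLx) (sub_pos.2 hxL)]

theorem continuousAt_div_one_sub (hL : 0 < L) {x : ℝ} (hx : x ∈ Ico L (1 - L)) :
    ContinuousAt (fun x => L * (1 - L) / (1 - x)) x :=
  continuousAt_const.div (by fun_prop) (by linarith [hx.2])

end MobiusMap

theorem sig_semiconj_fst (q : ℝ) : Semiconj Prod.fst (sig q) fun x => (1 - q) / (1 - x) :=
  fun _ => rfl

theorem sigma_iter_fst_tendsto_general (q : ℝ) (hq1 : 3/4 < q) (hq2 : q < 1)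
    (k : ℝ × ℝ)
    (hk1 : k.1 ∈ Set.Ioo ((1 - Real.sqrt (4*q - 3))/2) ((1 + Real.sqrt (4*q - 3))/2)) :
    StrictAnti (fun n : ℕ => ((sig q)^[n] k).1) ∧
    Filter.Tendsto (fun n : ℕ => ((sig q)^[n] k).1) Filter.atTop
      (nhds ((1 - Real.sqrt (4*q - 3))/2)) := by
  set s := Real.sqrt (4*q - 3)
  have hs_sq : s ^ 2 = 4*q - 3 := Real.sq_sqrt (by linarith)
  have hs_lt : s < 1 := (Real.sqrt_lt' one_pos).2 (by linarith)
  set L := (1 - s) / 2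
  have hL : 0 < L := half_pos (by linarith)
  have hq : 1 - q = L * (1 - L) := by linear_combination (1/4 : ℝ) * hs_sq
  rw [show (1 + s) / 2 = 1 - L by ring] at hk1
  have hmaps := mapsTo_div_one_sub hL
  have hlt : ∀ x ∈ Ioo L (1 - L), L * (1 - L) / (1 - x) < x := fun _ => div_one_sub_lt_self hL
  simp only [(sig_semiconj_fst q).iterate_right _ _, hq]
  exact ⟨strictAnti_iterate_of_lt_self hmaps hlt hk1,
    tendsto_iterate_of_lt_self hmaps hlt (fun _ => continuousAt_div_one_sub hL) hk1⟩

theorem sigma_iter_fst_tendsto (q : ℝ) (hq1 : 3/4 < q) (hq2 : q < 1)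
    (k : ℝ × ℝ) (hk : k ∈ Set.Ioo (0:ℝ) 1 ×ˢ Set.Ioo (0:ℝ) 1)
    (hk1 : k.1 ∈ Set.Ioo ((1 - Real.sqrt (4*q - 3))/2) ((1 + Real.sqrt (4*q - 3))/2))
    (hk2 : 0 < k.2) :
    StrictAnti (fun n : ℕ => ((sig q)^[n] k).1) ∧
    Filter.Tendsto (fun n : ℕ => ((sig q)^[n] k).1) Filter.atTop
      (nhds ((1 - Real.sqrt (4*q - 3))/2)) :=
  sigma_iter_fst_tendsto_general q hq1 hq2 k hk1
end

section
/- Let q ∈ (3/4, 1), κ ∈ W = I_q × [0,∞) with κ₂ > 0, and let u ∈ Points(κ). If u is a (countable) positive convex combination of vectors u¹, u², ... all lying in Area(κ), then uⁱ = u for all i. -/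
noncomputable def W (q : ℝ) : Set (ℝ × ℝ) :=
  (Set.Ioo ((1 - Real.sqrt (4*q - 3))/2) ((1 + Real.sqrt (4*q - 3))/2)) ×ˢ Set.Ici (0:ℝ)

noncomputable def Points (q : ℝ) (k : ℝ × ℝ) : Set (ℝ × ℝ) :=
  {p | ∃ n : ℕ, p = (tau q)^[n] k ∨ p = (sig q)^[n] k}

noncomputable def H (q : ℝ) (u : ℝ × ℝ) : Set (ℝ × ℝ) :=
  {w | ((tau q u).2 - u.2) * (w.1 - u.1) + (u.1 - (tau q u).1) * (w.2 - u.2) ≤ 0}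

noncomputable def Area (q : ℝ) (k : ℝ × ℝ) : Set (ℝ × ℝ) :=
  W q ∩ ⋂ u ∈ Points q k, H q u

/-!
Let `u ∈ Points κ` and `p = σ(u)`, which again lies in `Points κ` and satisfies `τ(p) = u`.
Then `Area κ` lies in the two half-planes `H(u)` and `H(p)`, whose boundary lines are the lines
`u τ(u)` and `p u`; both pass through `u`. A positive convex combination of points of a closed
half-plane that lies on its boundary line forces all the points onto that line. The two lines
are distinct, since `σ(u), u, τ(u)` are not collinear, so every point lies on both, i.e. equals `u`.
-/

theorem ContinuousLinearMap.apply_eq_of_hasSum_smul_of_le {ι E : Type*} [AddCommGroup E]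
    [Module ℝ E] [TopologicalSpace E] (f : E →L[ℝ] ℝ) {l : ι → ℝ} {x : ι → E} {u : E}
    (hl : ∀ i, 0 < l i) (hl1 : HasSum l 1) (hx : HasSum (fun i => l i • x i) u)
    (hf : ∀ i, f u ≤ f (x i)) (i : ι) : f (x i) = f u := by
  have hsum : HasSum (fun i => l i * (f (x i) - f u)) 0 := by
    simpa [mul_sub] using (hx.mapL f).sub (hl1.mul_right (f u))
  have hzero := congrFun ((hasSum_zero_iff_of_nonneg fun i =>
    mul_nonneg (hl i).le (sub_nonneg.2 (hf i))).1 hsum) i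
  simpa [(hl i).ne', sub_eq_zero] using hzero

noncomputable def planeCross (d : ℝ × ℝ) : ℝ × ℝ →L[ℝ] ℝ :=
  d.1 • ContinuousLinearMap.snd ℝ ℝ ℝ - d.2 • ContinuousLinearMap.fst ℝ ℝ ℝ

@[simp]
lemma planeCross_apply (d e : ℝ × ℝ) : planeCross d e = d.1 * e.2 - d.2 * e.1 := by
  simp [planeCross]

lemma planeCross_sub_apply_left (a b : ℝ × ℝ) : planeCross (a - b) a = planeCross (a - b) b := by
  simp only [planeCross_apply, Prod.fst_sub, Prod.snd_sub]
  ring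

lemma eq_of_planeCross_eq_of_planeCross_eq {d d' w u : ℝ × ℝ} (hdd' : planeCross d d' ≠ 0)
    (h : planeCross d w = planeCross d u) (h' : planeCross d' w = planeCross d' u) : w = u := by
  simp only [planeCross_apply] at h h'
  have h₁ : planeCross d d' * (w.1 - u.1) = 0 := by
    rw [planeCross_apply]; linear_combination d'.1 * h - d.1 * h'
  have h₂ : planeCross d d' * (w.2 - u.2) = 0 := by
    rw [planeCross_apply]; linear_combination d'.2 * h - d.2 * h'
  simp only [mul_eq_zero, hdd', false_or, sub_eq_zero] at h₁ h₂
  exact Prod.ext h₁ h₂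

lemma mem_H_iff {q : ℝ} {u w : ℝ × ℝ} :
    w ∈ H q u ↔ planeCross (tau q u - u) u ≤ planeCross (tau q u - u) w := by
  simp only [H, Set.mem_ofPred_eq, planeCross_apply, Prod.fst_sub, Prod.snd_sub]
  constructor <;> intro h <;> linarith

lemma mem_W_iff {q : ℝ} (hq : 3/4 ≤ q) {v : ℝ × ℝ} :
    v ∈ W q ↔ v.1 * v.1 - v.1 + (1 - q) < 0 ∧ 0 ≤ v.2 := by
  have hr := Real.sqrt_nonneg (4*q - 3)
  have hr2 := Real.sq_sqrt (show (0:ℝ) ≤ 4*q - 3 by linarith)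
  simp only [W, Set.mem_prod, Set.mem_Ioo, Set.mem_Ici]
  refine and_congr_left' ⟨fun ⟨h₁, h₂⟩ => by nlinarith, fun h => ⟨?_, ?_⟩⟩
  · nlinarith [sq_nonneg (2*v.1 - 1 + Real.sqrt (4*q - 3))]
  · nlinarith [sq_nonneg (2*v.1 - 1 - Real.sqrt (4*q - 3))]

lemma fst_mem_Ioo_of_mem_W {q : ℝ} (hq1 : 3/4 ≤ q) (hq2 : q < 1) {v : ℝ × ℝ} (hv : v ∈ W q) :
    v.1 ∈ Set.Ioo 0 1 := by
  have := ((mem_W_iff hq1).1 hv).1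
  constructor <;> nlinarith

lemma sig_tau {q : ℝ} (hq : q ≠ 1) {v : ℝ × ℝ} (hv : v.1 ≠ 0) : sig q (tau q v) = v := by
  have hq' : 1 - q ≠ 0 := sub_ne_zero.2 hq.symm
  have h₁ : 1 - (q - 1 + v.1)/v.1 = (1 - q)/v.1 := by field_simp; ring
  simp only [sig, tau, h₁, Prod.ext_iff]
  constructor <;> field_simp

lemma tau_sig {q : ℝ} (hq : q ≠ 1) {v : ℝ × ℝ} (hv : v.1 ≠ 1) : tau q (sig q v) = v := by
  have hv' : 1 - v.1 ≠ 0 := sub_ne_zero.2 hv.symm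
  have hq' : 1 - q ≠ 0 := sub_ne_zero.2 hq.symm
  simp only [tau, sig, Prod.ext_iff]
  constructor
  · field_simp; ring
  · field_simp

lemma mapsTo_tau {q : ℝ} (hq1 : 3/4 ≤ q) (hq2 : q < 1) :
    Set.MapsTo (tau q) (W q ∩ {v | 0 < v.2}) (W q ∩ {v | 0 < v.2}) := by
  rintro v ⟨hvW, hv2 : 0 < v.2⟩
  obtain ⟨hv1, -⟩ := fst_mem_Ioo_of_mem_W hq1 hq2 hvW
  have hquad := ((mem_W_iff hq1).1 hvW).1
  -- `τ` multiplies the quadratic `x² - x + (1 - q)` cutting out `I_q` by `(1 - q) / x²`.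
  have key : (tau q v).1 * (tau q v).1 - (tau q v).1 + (1 - q) =
      (1 - q) * (v.1 * v.1 - v.1 + (1 - q)) / v.1 ^ 2 := by
    simp only [tau]; field_simp; ring
  have hy : 0 < (tau q v).2 := div_pos hv2 hv1
  refine ⟨(mem_W_iff hq1).2 ⟨?_, hy.le⟩, hy⟩
  rw [key]
  exact div_neg_of_neg_of_pos (mul_neg_of_pos_of_neg (by linarith) hquad) (by positivity)

lemma mapsTo_sig {q : ℝ} (hq1 : 3/4 ≤ q) (hq2 : q < 1) :
    Set.MapsTo (sig q) (W q ∩ {v | 0 < v.2}) (W q ∩ {v | 0 < v.2}) := by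
  rintro v ⟨hvW, hv2 : 0 < v.2⟩
  obtain ⟨-, hv1⟩ := fst_mem_Ioo_of_mem_W hq1 hq2 hvW
  have hquad := ((mem_W_iff hq1).1 hvW).1
  have hv1' : 0 < 1 - v.1 := by linarith
  have key : (sig q v).1 * (sig q v).1 - (sig q v).1 + (1 - q) =
      (1 - q) * (v.1 * v.1 - v.1 + (1 - q)) / (1 - v.1) ^ 2 := by
    simp only [sig]; field_simp; ring
  have hy : 0 < (sig q v).2 := div_pos (mul_pos hv2 (by linarith)) hv1'
  refine ⟨(mem_W_iff hq1).2 ⟨?_, hy.le⟩, hy⟩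
  rw [key]
  exact div_neg_of_neg_of_pos (mul_neg_of_pos_of_neg (by linarith) hquad) (by positivity)

lemma Points_subset_W {q : ℝ} (hq1 : 3/4 ≤ q) (hq2 : q < 1) {k : ℝ × ℝ} (hk : k ∈ W q)
    (hk2 : 0 < k.2) : Points q k ⊆ W q ∩ {v | 0 < v.2} := by
  rintro u ⟨n, rfl | rfl⟩
  · exact (mapsTo_tau hq1 hq2).iterate n ⟨hk, hk2⟩
  · exact (mapsTo_sig hq1 hq2).iterate n ⟨hk, hk2⟩

lemma sig_mem_Points {q : ℝ} (hq1 : 3/4 ≤ q) (hq2 : q < 1) {k : ℝ × ℝ} (hk : k ∈ W q)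
    (hk2 : 0 < k.2) {u : ℝ × ℝ} (hu : u ∈ Points q k) : sig q u ∈ Points q k := by
  obtain ⟨n, rfl | rfl⟩ := hu
  · cases n with
    | zero => exact ⟨1, Or.inr rfl⟩
    | succ n =>
      have hn := (Points_subset_W hq1 hq2 hk hk2 ⟨n, Or.inl rfl⟩).1
      refine ⟨n, Or.inl ?_⟩
      rw [Function.iterate_succ_apply', sig_tau hq2.ne (fst_mem_Ioo_of_mem_W hq1 hq2 hn).1.ne']
  · exact ⟨n + 1, Or.inr (Function.iterate_succ_apply' _ _ _).symm⟩

lemma Area_subset_H {q : ℝ} {k u : ℝ × ℝ} (hu : u ∈ Points q k) : Area q k ⊆ H q u :=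
  Set.inter_subset_right.trans (Set.biInter_subset_of_mem hu)

lemma planeCross_tau_sub_sub_sig_ne_zero {q : ℝ} (hq1 : 3/4 ≤ q) (hq2 : q < 1) {u : ℝ × ℝ}
    (hu : u ∈ W q) (hu2 : 0 < u.2) : planeCross (tau q u - u) (u - sig q u) ≠ 0 := by
  obtain ⟨hx0, hx1⟩ := fst_mem_Ioo_of_mem_W hq1 hq2 hu
  have hquad := ((mem_W_iff hq1).1 hu).1
  have hx1' : 1 - u.1 ≠ 0 := by linarith
  have key : planeCross (tau q u - u) (u - sig q u) =
      (q - 1) * u.2 * (q - 1 + u.1 - u.1 * u.1) / (u.1 * (1 - u.1)) := by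
    simp only [planeCross_apply, Prod.fst_sub, Prod.snd_sub, tau, sig]
    field_simp; ring
  rw [key]
  refine div_ne_zero (mul_ne_zero (mul_ne_zero ?_ hu2.ne') ?_) (mul_ne_zero hx0.ne' hx1')
  all_goals linarith

theorem extreme_point_of_area (q : ℝ) (hq1 : 3/4 < q) (hq2 : q < 1)
    (k : ℝ × ℝ) (hk : k ∈ W q) (hk2 : 0 < k.2)
    (u : ℝ × ℝ) (hu : u ∈ Points q k)
    (l : ℕ → ℝ) (ui : ℕ → ℝ × ℝ)
    (hl : ∀ i, 0 < l i)
    (hui : ∀ i, ui i ∈ Area q k)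
    (hlsum : HasSum l 1)
    (hcomb : HasSum (fun i => l i • ui i) u) :
    ∀ i, ui i = u := by
  obtain ⟨huW, hu2⟩ := Points_subset_W hq1.le hq2 hk hk2 hu
  have hτσ : tau q (sig q u) = u := tau_sig hq2.ne (fst_mem_Ioo_of_mem_W hq1.le hq2 huW).2.ne
  have hσu := sig_mem_Points hq1.le hq2 hk hk2 hu
  have h₁ := (planeCross (tau q u - u)).apply_eq_of_hasSum_smul_of_le hl hlsum hcomb
    fun i => mem_H_iff.1 (Area_subset_H hu (hui i))
  have h₂ := (planeCross (u - sig q u)).apply_eq_of_hasSum_smul_of_le hl hlsum hcomb fun i => by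
    simpa only [mem_H_iff, hτσ, ← planeCross_sub_apply_left] using Area_subset_H hσu (hui i)
  exact fun i => eq_of_planeCross_eq_of_planeCross_eq
    (planeCross_tau_sub_sub_sig_ne_zero hq1.le hq2 huW hu2) (h₁ i) (h₂ i)
end

section
/- Let q ∈ (3/4, 1), κ ∈ (0,1)² with κ₁ ∈ I_q, κ₂ > 0, and κ₁ + κ₂ < q - 1/2, and let γ satisfy (1-q)κ₂ < γ. Let σ(v) = ((1-q)/(1-v₁), v₂(1-q)/(1-v₁)). For every n ≥ 1, define pₙ = (γ - (1-q)σⁿ⁻¹(κ)₂)/(1 - σⁿ(κ)₁ - σⁿ(κ)₂). Then pₙ > 0 and 1 - σⁿ(κ)₁ - σⁿ(κ)₂ > 0, so pₙ is well-defined and positive. -/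
open Set

lemma div_one_sub_mem_Ioo {lo hi c x : ℝ} (hlo : 0 < lo) (hsum : lo + hi = 1)
    (hprod : lo * hi = c) (hx : x ∈ Ioo lo hi) : c / (1 - x) ∈ Ioo lo x := by
  obtain ⟨hlox, hxhi⟩ := hx
  have hpos : 0 < 1 - x := by linarith
  constructor
  · rw [lt_div_iff₀ hpos]
    nlinarith
  · rw [div_lt_iff₀ hpos]
    nlinarith [mul_pos (sub_pos.mpr hlox) (sub_pos.mpr hxhi)]

section Orbit

variable {q lo hi : ℝ} (hlo : 0 < lo) (hsum : lo + hi = 1) (hprod : lo * hi = 1 - q)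
include hlo hsum hprod

lemma sig_fst_mem_Ioo {v : ℝ × ℝ} (hv : v.1 ∈ Ioo lo hi) : (sig q v).1 ∈ Ioo lo v.1 :=
  div_one_sub_mem_Ioo hlo hsum hprod hv

lemma mapsTo_sig_s19 : MapsTo (sig q) (Ioo lo hi ×ˢ Ioi 0) (Ioo lo hi ×ˢ Ioi 0) := by
  rintro v ⟨hv1, hv2 : 0 < v.2⟩
  obtain ⟨hlo', hlt⟩ := sig_fst_mem_Ioo hlo hsum hprod hv1
  have hpos : 0 < 1 - v.1 := by linarith [hv1.2]
  refine ⟨⟨hlo', hlt.trans hv1.2⟩, ?_⟩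
  have : 0 < 1 - q := by nlinarith
  exact div_pos (mul_pos hv2 this) hpos

lemma sig_le {v : ℝ × ℝ} (hv : v ∈ Ioo lo hi ×ˢ Ioi 0) : sig q v ≤ v := by
  obtain ⟨hv1, hv2 : 0 < v.2⟩ := hv
  obtain ⟨-, hlt⟩ := sig_fst_mem_Ioo hlo hsum hprod hv1
  have hfactor : (1 - q) / (1 - v.1) ≤ 1 := (hlt.trans hv1.2).le.trans (by linarith)
  refine ⟨hlt.le, ?_⟩
  calc (sig q v).2 = v.2 * ((1 - q) / (1 - v.1)) := mul_div_assoc _ _ _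
    _ ≤ v.2 := mul_le_of_le_one_right hv2.le hfactor

lemma antitone_iterate_sig {k : ℝ × ℝ} (hk : k ∈ Ioo lo hi ×ˢ Ioi 0) :
    Antitone fun m => (sig q)^[m] k :=
  antitone_nat_of_succ_le fun m => by
    rw [Function.iterate_succ_apply']
    exact sig_le hlo hsum hprod ((mapsTo_sig_s19 hlo hsum hprod).iterate m hk)

end Orbit

lemma quadratic_roots_pos_add_mul {q : ℝ} (hq1 : 3/4 < q) (hq2 : q < 1) :
    0 < (1 - √(4*q - 3))/2 ∧ (1 - √(4*q - 3))/2 + (1 + √(4*q - 3))/2 = 1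
      ∧ (1 - √(4*q - 3))/2 * ((1 + √(4*q - 3))/2) = 1 - q := by
  have hsq : √(4*q - 3) ^ 2 = 4*q - 3 := Real.sq_sqrt (by linarith)
  have hlt : √(4*q - 3) < 1 := by nlinarith [Real.sqrt_nonneg (4*q - 3)]
  exact ⟨by linarith, by ring, by linear_combination -hsq / 4⟩

theorem p_n_pos_general (q : ℝ) (hq1 : 3/4 < q) (hq2 : q < 1)
    (k : ℝ × ℝ)
    (hk1 : k.1 ∈ Set.Ioo ((1 - Real.sqrt (4*q - 3))/2) ((1 + Real.sqrt (4*q - 3))/2))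
    (hk2 : 0 < k.2)
    (hksum : k.1 + k.2 < q - 1/2)
    (g : ℝ) (hg : (1 - q) * k.2 < g)
    (n : ℕ) :
    0 < 1 - ((sig q)^[n] k).1 - ((sig q)^[n] k).2
    ∧ 0 < (g - (1 - q) * ((sig q)^[n-1] k).2)
          / (1 - ((sig q)^[n] k).1 - ((sig q)^[n] k).2) := by
  obtain ⟨hlo, hsum, hprod⟩ := quadratic_roots_pos_add_mul hq1 hq2
  have hanti := antitone_iterate_sig hlo hsum hprod (k := k) ⟨hk1, hk2⟩
  have hn_le : (sig q)^[n] k ≤ k := hanti (Nat.zero_le n)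
  have hn1_le : (sig q)^[n-1] k ≤ k := hanti (Nat.zero_le (n - 1))
  have hden : 0 < 1 - ((sig q)^[n] k).1 - ((sig q)^[n] k).2 := by
    linarith [hn_le.1, hn_le.2]
  have hnum : (1 - q) * ((sig q)^[n-1] k).2 ≤ (1 - q) * k.2 :=
    mul_le_mul_of_nonneg_left hn1_le.2 (by linarith)
  exact ⟨hden, div_pos (by linarith) hden⟩

theorem p_n_pos (q : ℝ) (hq1 : 3/4 < q) (hq2 : q < 1)
    (k : ℝ × ℝ) (hk : k ∈ Set.Ioo (0:ℝ) 1 ×ˢ Set.Ioo (0:ℝ) 1)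
    (hk1 : k.1 ∈ Set.Ioo ((1 - Real.sqrt (4*q - 3))/2) ((1 + Real.sqrt (4*q - 3))/2))
    (hk2 : 0 < k.2)
    (hksum : k.1 + k.2 < q - 1/2)
    (g : ℝ) (hg : (1 - q) * k.2 < g)
    (n : ℕ) (hn : 1 ≤ n) :
    0 < 1 - ((sig q)^[n] k).1 - ((sig q)^[n] k).2
    ∧ 0 < (g - (1 - q) * ((sig q)^[n-1] k).2)
          / (1 - ((sig q)^[n] k).1 - ((sig q)^[n] k).2) :=
  p_n_pos_general q hq1 hq2 k hk1 hk2 hksum g hg n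
end
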